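/- arXiv:1106.2650 — 9 statements merged into one kernel-verified Lean document; each statement's English description precedes it below -/
import Mathlib

section
/- For any positive real channel gains g_{j,k}^{(s)} > 0 (for j,k ∈ {1,2}, s ∈ {1,2}), the channel selection game always has at least one pure Nash equilibrium. That is, there exists (α₁, α₂) ∈ {0,1}² such that for each player k ∈ {1,2}, u_k(α_k, α_{-k}) ≥ u_k(α_k', α_{-k}) for all α_k' ∈ {0,1}. -/
/-!
In a two-player game with actions `{0, 1}`, call a player's payoff *monotone* if whenever
action `1` is a best reply to the opponent's `1`, it is also one to the opponent's `0`.
If both payoffs are monotone, a pure equilibrium exists: a player for whom `1` answers `1`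
has `1` as a dominant action, and otherwise both players answer `1` with `0`, which leaves
only the replies to `0` to be examined.

For the channel selection game this monotonicity holds because interference only lowers
a rate: an opponent moving from channel 1 to channel 2 makes channel 1 better and
channel 2 worse.
-/

open Real Set

/-- Utility of a player with direct gains `gk1 gk2`, cross gains `gi1 gi2`,
own action `a`, opponent action `b`. -/
noncomputable def u (gk1 gk2 gi1 gi2 a b : ℝ) : ℝ :=
  Real.logb 2 (1 + a * gk1 / (1 + b * gi1)) +
  Real.logb 2 (1 + (1 - a) * gk2 / (1 + (1 - b) * gi2))

section BinaryGame

variable {α β : Type*} [Zero α] [One α] [LinearOrder β]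

def IsBestResponse (f : α → α → β) (a b : α) : Prop :=
  a ∈ ({0, 1} : Set α) ∧ ∀ a' ∈ ({0, 1} : Set α), f a' b ≤ f a b

lemma isBestResponse_one_iff {f : α → α → β} {b : α} :
    IsBestResponse f 1 b ↔ f 0 b ≤ f 1 b := by
  simp [IsBestResponse]

lemma isBestResponse_zero_iff {f : α → α → β} {b : α} :
    IsBestResponse f 0 b ↔ f 1 b ≤ f 0 b := by
  simp [IsBestResponse]

lemma exists_isBestResponse (f : α → α → β) (b : α) : ∃ a, IsBestResponse f a b := by
  rcases le_total (f 0 b) (f 1 b) with h | h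
  · exact ⟨1, isBestResponse_one_iff.2 h⟩
  · exact ⟨0, isBestResponse_zero_iff.2 h⟩

lemma isBestResponse_one_of_mono {f : α → α → β} (hf : f 0 1 ≤ f 1 1 → f 0 0 ≤ f 1 0)
    (h : IsBestResponse f 1 1) {b : α} (hb : b ∈ ({0, 1} : Set α)) : IsBestResponse f 1 b := by
  rw [isBestResponse_one_iff] at h
  rcases hb with rfl | rfl
  · exact isBestResponse_one_iff.2 (hf h)
  · exact isBestResponse_one_iff.2 h

lemma exists_pure_nash_of_mono {f g : α → α → β}
    (hf : f 0 1 ≤ f 1 1 → f 0 0 ≤ f 1 0) (hg : g 0 1 ≤ g 1 1 → g 0 0 ≤ g 1 0) :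
    ∃ a b, IsBestResponse f a b ∧ IsBestResponse g b a := by
  by_cases hf1 : IsBestResponse f 1 1
  · obtain ⟨b, hb⟩ := exists_isBestResponse g 1
    exact ⟨1, b, isBestResponse_one_of_mono hf hf1 hb.1, hb⟩
  by_cases hg1 : IsBestResponse g 1 1
  · obtain ⟨a, ha⟩ := exists_isBestResponse f 1
    exact ⟨a, 1, ha, isBestResponse_one_of_mono hg hg1 ha.1⟩
  have hf0 : IsBestResponse f 0 1 :=
    isBestResponse_zero_iff.2 (le_of_not_ge (mt isBestResponse_one_iff.2 hf1))
  have hg0 : IsBestResponse g 0 1 :=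
    isBestResponse_zero_iff.2 (le_of_not_ge (mt isBestResponse_one_iff.2 hg1))
  obtain ⟨a, ha⟩ := exists_isBestResponse f 0
  rcases ha.1 with rfl | rfl
  · obtain ⟨b, hb⟩ := exists_isBestResponse g 0
    rcases hb.1 with rfl | rfl
    · exact ⟨0, 0, ha, hb⟩
    · exact ⟨0, 1, hf0, hb⟩
  · exact ⟨1, 0, ha, hg0⟩

end BinaryGame

lemma u_mono {gk1 gk2 gi1 gi2 : ℝ} (hk1 : 0 ≤ gk1) (hk2 : 0 ≤ gk2) (hi1 : 0 ≤ gi1)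
    (hi2 : 0 ≤ gi2) (h : u gk1 gk2 gi1 gi2 0 1 ≤ u gk1 gk2 gi1 gi2 1 1) :
    u gk1 gk2 gi1 gi2 0 0 ≤ u gk1 gk2 gi1 gi2 1 0 := by
  simp only [u, zero_mul, one_mul, zero_div, add_zero, sub_zero, sub_self, logb_one,
    zero_add, div_one] at h ⊢
  rw [logb_le_logb one_lt_two (by positivity) (by positivity)] at h
  apply logb_le_logb_of_le one_lt_two (by positivity)
  calc 1 + gk2 / (1 + gi2) ≤ 1 + gk2 := by gcongr; exact div_le_self hk2 (by linarith)
    _ ≤ 1 + gk1 / (1 + gi1) := h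
    _ ≤ 1 + gk1 := by gcongr; exact div_le_self hk1 (by linarith)

/-- The channel selection game always has at least one pure Nash equilibrium. -/
theorem cs_exists_pure_NE
    (g111 g112 g121 g122 g211 g212 g221 g222 : ℝ)
    (h111 : 0 < g111) (h112 : 0 < g112) (h121 : 0 < g121) (h122 : 0 < g122)
    (h211 : 0 < g211) (h212 : 0 < g212) (h221 : 0 < g221) (h222 : 0 < g222) :
    ∃ a1 a2 : ℝ, a1 ∈ ({0, 1} : Set ℝ) ∧ a2 ∈ ({0, 1} : Set ℝ) ∧
      (∀ a1' ∈ ({0, 1} : Set ℝ),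
        u g111 g112 g121 g122 a1' a2 ≤ u g111 g112 g121 g122 a1 a2) ∧
      (∀ a2' ∈ ({0, 1} : Set ℝ),
        u g221 g222 g211 g212 a2' a1 ≤ u g221 g222 g211 g212 a2 a1) := by
  obtain ⟨a1, a2, h1, h2⟩ := exists_pure_nash_of_mono
    (u_mono h111.le h112.le h121.le h122.le) (u_mono h221.le h222.le h211.le h212.le)
  exact ⟨a1, a2, h1.1, h2.1, h1.2, h2.2⟩
end

section
/- The action profile (α₁, α₂) = (1,1) is a pure Nash equilibrium of the channel selection game if and only if g_{1,1}^{(1)} ≥ g_{1,1}^{(2)}(1 + g_{1,2}^{(1)}) and g_{2,2}^{(1)} ≥ g_{2,2}^{(2)}(1 + g_{2,1}^{(1)}). -/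
/-!
Against an opponent on channel 1, staying on channel 1 earns `log₂ (1 + g⁽¹⁾ₖₖ / (1 + g⁽¹⁾ₖ₋ₖ))`
while switching earns the interference-free rate `log₂ (1 + g⁽²⁾ₖₖ)` on channel 2. Since `log₂` is
strictly increasing on positive reals, staying is a best response exactly when
`g⁽²⁾ₖₖ ≤ g⁽¹⁾ₖₖ / (1 + g⁽¹⁾ₖ₋ₖ)`, i.e. `g⁽²⁾ₖₖ (1 + g⁽¹⁾ₖ₋ₖ) ≤ g⁽¹⁾ₖₖ`.
-/

open Real Set

lemma u_one_left (gk1 gk2 gi1 gi2 b : ℝ) :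
    u gk1 gk2 gi1 gi2 1 b = logb 2 (1 + gk1 / (1 + b * gi1)) := by
  simp [u]

lemma u_zero_one (gk1 gk2 gi1 gi2 : ℝ) : u gk1 gk2 gi1 gi2 0 1 = logb 2 (1 + gk2) := by
  simp [u]

lemma u_zero_one_le_u_one_one_iff {gk1 gk2 gi1 : ℝ} (gi2 : ℝ) (hk1 : 0 ≤ gk1) (hk2 : 0 ≤ gk2)
    (hi1 : 0 ≤ gi1) :
    u gk1 gk2 gi1 gi2 0 1 ≤ u gk1 gk2 gi1 gi2 1 1 ↔ gk2 * (1 + gi1) ≤ gk1 := by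
  rw [u_zero_one, u_one_left, one_mul, logb_le_logb one_lt_two (by positivity) (by positivity),
    add_le_add_iff_left, le_div_iff₀ (by positivity)]

lemma forall_u_le_u_one_one_iff {gk1 gk2 gi1 : ℝ} (gi2 : ℝ) (hk1 : 0 ≤ gk1) (hk2 : 0 ≤ gk2)
    (hi1 : 0 ≤ gi1) :
    (∀ a ∈ ({0, 1} : Set ℝ), u gk1 gk2 gi1 gi2 a 1 ≤ u gk1 gk2 gi1 gi2 1 1) ↔
      gk2 * (1 + gi1) ≤ gk1 := by
  simp only [mem_insert_iff, mem_singleton_iff, forall_eq_or_imp, forall_eq, le_refl, and_true]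
  exact u_zero_one_le_u_one_one_iff gi2 hk1 hk2 hi1

theorem cs_NE_one_one_iff_general
    (g111 g112 g121 g122 g211 g212 g221 g222 : ℝ)
    (h111 : 0 < g111) (h112 : 0 < g112) (h121 : 0 < g121)
    (h211 : 0 < g211) (h221 : 0 < g221) (h222 : 0 < g222) :
    ((∀ a1' ∈ ({0, 1} : Set ℝ),
        u g111 g112 g121 g122 a1' 1 ≤ u g111 g112 g121 g122 1 1) ∧
     (∀ a2' ∈ ({0, 1} : Set ℝ),
        u g221 g222 g211 g212 a2' 1 ≤ u g221 g222 g211 g212 1 1))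
    ↔ (g112 * (1 + g121) ≤ g111 ∧ g222 * (1 + g211) ≤ g221) := by
  rw [forall_u_le_u_one_one_iff g122 h111.le h112.le h121.le,
    forall_u_le_u_one_one_iff g212 h221.le h222.le h211.le]

/-- `(1,1)` is a pure NE of the CS game iff
`g_{1,1}^{(1)} ≥ g_{1,1}^{(2)}(1+g_{1,2}^{(1)})` and `g_{2,2}^{(1)} ≥ g_{2,2}^{(2)}(1+g_{2,1}^{(1)})`. -/
theorem cs_NE_one_one_iff
    (g111 g112 g121 g122 g211 g212 g221 g222 : ℝ)
    (h111 : 0 < g111) (h112 : 0 < g112) (h121 : 0 < g121) (h122 : 0 < g122)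
    (h211 : 0 < g211) (h212 : 0 < g212) (h221 : 0 < g221) (h222 : 0 < g222) :
    ((∀ a1' ∈ ({0, 1} : Set ℝ),
        u g111 g112 g121 g122 a1' 1 ≤ u g111 g112 g121 g122 1 1) ∧
     (∀ a2' ∈ ({0, 1} : Set ℝ),
        u g221 g222 g211 g212 a2' 1 ≤ u g221 g222 g211 g212 1 1))
    ↔ (g112 * (1 + g121) ≤ g111 ∧ g222 * (1 + g211) ≤ g221) :=
  cs_NE_one_one_iff_general g111 g112 g121 g122 g211 g212 g221 g222 h111 h112 h121 h211 h221 h222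
end

section
/- The action profile (α₁, α₂) = (0,0) is a pure Nash equilibrium of the channel selection game if and only if g_{1,1}^{(2)} ≥ g_{1,1}^{(1)}(1 + g_{1,2}^{(2)}) and g_{2,2}^{(2)} ≥ g_{2,2}^{(1)}(1 + g_{2,1}^{(2)}). -/
open Real Set

lemma u_one_zero (gk1 gk2 gi1 gi2 : ℝ) : u gk1 gk2 gi1 gi2 1 0 = logb 2 (1 + gk1) := by
  simp [u]

lemma u_zero_zero (gk1 gk2 gi1 gi2 : ℝ) :
    u gk1 gk2 gi1 gi2 0 0 = logb 2 (1 + gk2 / (1 + gi2)) := by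
  simp [u]

lemma u_one_zero_le_u_zero_zero_iff {gk1 gk2 gi2 : ℝ} (gi1 : ℝ)
    (hk1 : 0 ≤ gk1) (hk2 : 0 ≤ gk2) (hi2 : 0 ≤ gi2) :
    u gk1 gk2 gi1 gi2 1 0 ≤ u gk1 gk2 gi1 gi2 0 0 ↔ gk1 * (1 + gi2) ≤ gk2 := by
  have hi2' : 0 < 1 + gi2 := by linarith
  rw [u_one_zero, u_zero_zero, logb_le_logb one_lt_two (by linarith) (by positivity),
    add_le_add_iff_left, le_div_iff₀ hi2']

lemma forall_u_le_u_zero_zero_iff {gk1 gk2 gi2 : ℝ} (gi1 : ℝ)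
    (hk1 : 0 ≤ gk1) (hk2 : 0 ≤ gk2) (hi2 : 0 ≤ gi2) :
    (∀ a ∈ ({0, 1} : Set ℝ), u gk1 gk2 gi1 gi2 a 0 ≤ u gk1 gk2 gi1 gi2 0 0) ↔
      gk1 * (1 + gi2) ≤ gk2 := by
  rw [← u_one_zero_le_u_zero_zero_iff gi1 hk1 hk2 hi2]
  constructor
  · exact fun h ↦ h 1 (by simp)
  · rintro h a (rfl | rfl)
    exacts [le_rfl, h]

theorem cs_NE_zero_zero_iff_general
    (g111 g112 g121 g122 g211 g212 g221 g222 : ℝ)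
    (h111 : 0 < g111) (h112 : 0 < g112) (h122 : 0 < g122)
    (h212 : 0 < g212) (h221 : 0 < g221) (h222 : 0 < g222) :
    ((∀ a1' ∈ ({0, 1} : Set ℝ),
        u g111 g112 g121 g122 a1' 0 ≤ u g111 g112 g121 g122 0 0) ∧
     (∀ a2' ∈ ({0, 1} : Set ℝ),
        u g221 g222 g211 g212 a2' 0 ≤ u g221 g222 g211 g212 0 0))
    ↔ (g111 * (1 + g122) ≤ g112 ∧ g221 * (1 + g212) ≤ g222) :=
  and_congr (forall_u_le_u_zero_zero_iff g121 h111.le h112.le h122.le)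
    (forall_u_le_u_zero_zero_iff g211 h221.le h222.le h212.le)

/-- `(0,0)` is a pure NE of the CS game iff
`g_{1,1}^{(2)} ≥ g_{1,1}^{(1)}(1+g_{1,2}^{(2)})` and `g_{2,2}^{(2)} ≥ g_{2,2}^{(1)}(1+g_{2,1}^{(2)})`. -/
theorem cs_NE_zero_zero_iff
    (g111 g112 g121 g122 g211 g212 g221 g222 : ℝ)
    (h111 : 0 < g111) (h112 : 0 < g112) (h121 : 0 < g121) (h122 : 0 < g122)
    (h211 : 0 < g211) (h212 : 0 < g212) (h221 : 0 < g221) (h222 : 0 < g222) :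
    ((∀ a1' ∈ ({0, 1} : Set ℝ),
        u g111 g112 g121 g122 a1' 0 ≤ u g111 g112 g121 g122 0 0) ∧
     (∀ a2' ∈ ({0, 1} : Set ℝ),
        u g221 g222 g211 g212 a2' 0 ≤ u g221 g222 g211 g212 0 0))
    ↔ (g111 * (1 + g122) ≤ g112 ∧ g221 * (1 + g212) ≤ g222) :=
  cs_NE_zero_zero_iff_general g111 g112 g121 g122 g211 g212 g221 g222 h111 h112 h122 h212 h221 h222
end

section
/- If the strict negations of the (1,1)- and (0,0)-equilibrium conditions hold for both players, i.e. g_{1,1}^{(1)} < g_{1,1}^{(2)}(1+g_{1,2}^{(1)}), g_{2,2}^{(1)} < g_{2,2}^{(2)}(1+g_{2,1}^{(1)}), g_{1,1}^{(2)} < g_{1,1}^{(1)}(1+g_{1,2}^{(2)}), and g_{2,2}^{(2)} < g_{2,2}^{(1)}(1+g_{2,1}^{(2)}), so that neither (1,1) nor (0,0) is a pure Nash equilibrium, then both (1,0) and (0,1) are pure Nash equilibria of the channel selection game. -/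
open Real Set

lemma uA (gk1 gk2 gi1 gi2 : ℝ) (hk1 : 0 < gk1) (hk2 : 0 < gk2) (hi2 : 0 < gi2)
    (h : gk2 ≤ gk1 * (1 + gi2)) :
    ∀ a' ∈ ({0, 1} : Set ℝ),
      u gk1 gk2 gi1 gi2 a' 0 ≤ u gk1 gk2 gi1 gi2 1 0 := by
  intro a' ha'
  have hpos : (0:ℝ) < 1 + gi2 := by linarith
  rcases ha' with rfl | rfl
  · simp only [u]
    norm_num
    have hdiv : gk2 / (1 + gi2) ≤ gk1 := (div_le_iff₀ hpos).2 (by linarith)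
    have h1 : (0:ℝ) < 1 + gk2 / (1 + gi2) := by positivity
    exact Real.logb_le_logb_of_le one_lt_two h1 (by linarith)
  · simp
lemma uB (gk1 gk2 gi1 gi2 : ℝ) (hk1 : 0 < gk1) (hk2 : 0 < gk2) (hi1 : 0 < gi1)
    (h : gk1 ≤ gk2 * (1 + gi1)) :
    ∀ a' ∈ ({0, 1} : Set ℝ),
      u gk1 gk2 gi1 gi2 a' 1 ≤ u gk1 gk2 gi1 gi2 0 1 := by
  intro a' ha'
  have hpos : (0:ℝ) < 1 + gi1 := by linarith
  rcases ha' with rfl | rfl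
  · simp
  · simp only [u]
    norm_num
    have hdiv : gk1 / (1 + gi1) ≤ gk2 := (div_le_iff₀ hpos).2 (by linarith)
    have h1 : (0:ℝ) < 1 + gk1 / (1 + gi1) := by positivity
    exact Real.logb_le_logb_of_le one_lt_two h1 (by linarith)

/-- If the strict negations of the `(1,1)`- and `(0,0)`-equilibrium conditions hold
for both players, then both `(1,0)` and `(0,1)` are pure NE of the CS game. -/
theorem cs_anticoordination
    (g111 g112 g121 g122 g211 g212 g221 g222 : ℝ)
    (h111 : 0 < g111) (h112 : 0 < g112) (h121 : 0 < g121) (h122 : 0 < g122)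
    (h211 : 0 < g211) (h212 : 0 < g212) (h221 : 0 < g221) (h222 : 0 < g222)
    (h1 : g111 < g112 * (1 + g121))
    (h2 : g221 < g222 * (1 + g211))
    (h3 : g112 < g111 * (1 + g122))
    (h4 : g222 < g221 * (1 + g212)) :
    ((∀ a1' ∈ ({0, 1} : Set ℝ),
        u g111 g112 g121 g122 a1' 0 ≤ u g111 g112 g121 g122 1 0) ∧
     (∀ a2' ∈ ({0, 1} : Set ℝ),
        u g221 g222 g211 g212 a2' 1 ≤ u g221 g222 g211 g212 0 1)) ∧
    ((∀ a1' ∈ ({0, 1} : Set ℝ),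
        u g111 g112 g121 g122 a1' 1 ≤ u g111 g112 g121 g122 0 1) ∧
     (∀ a2' ∈ ({0, 1} : Set ℝ),
        u g221 g222 g211 g212 a2' 0 ≤ u g221 g222 g211 g212 1 0)) :=
  ⟨⟨uA _ _ _ _ h111 h112 h122 h3.le, uB _ _ _ _ h221 h222 h211 h2.le⟩,
   ⟨uB _ _ _ _ h111 h112 h121 h1.le, uA _ _ _ _ h221 h222 h212 h4.le⟩⟩
end

section
/- Fix α_{-k} ∈ [0,1] and define c_k = -(1/2)(g_{k,-k}^{(1)}/g_{k,k}^{(1)} + g_{k,-k}^{(2)}/g_{k,k}^{(2)}) and d_k = (g_{k,k}^{(1)}(1+g_{k,-k}^{(2)}) + g_{k,k}^{(2)}(g_{k,k}^{(1)}-1))/(2 g_{k,k}^{(1)} g_{k,k}^{(2)}). Then the unique maximizer over [0,1] of α_k ↦ u_k(α_k, α_{-k}) is α_k* = min(1, max(0, c_k α_{-k} + d_k)). -/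
/-!
For fixed `b`, write `C₁ = 1 + b g⁽¹⁾ᵢ` and `C₂ = 1 + (1 - b) g⁽²⁾ᵢ` for the interference-plus-noise
terms. Then `u` is `log₂` of `(1 + a g⁽¹⁾ₖ / C₁) (1 + (1 - a) g⁽²⁾ₖ / C₂)`, a concave quadratic in `a`
whose vertex is `c b + d`. Since `log₂` is increasing, `u` strictly decreases with the distance from
`a` to the vertex, so its unique maximizer on `[0, 1]` is the point of `[0, 1]` closest to the vertex,
namely the clamp `min 1 (max 0 (c b + d))`.
-/

open Real Set

section Clamp

variable {lo hi v x : ℝ}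

lemma clamp_mem_Icc (h : lo ≤ hi) : min hi (max lo v) ∈ Icc lo hi :=
  ⟨le_min h (le_max_left _ _), min_le_left _ _⟩

lemma sq_sub_clamp_lt (hx : x ∈ Icc lo hi) (hne : x ≠ min hi (max lo v)) :
    (min hi (max lo v) - v) ^ 2 < (x - v) ^ 2 := by
  obtain ⟨hlo, hhi⟩ := hx
  rcases le_or_gt v lo with hv | hv
  · rw [max_eq_left hv, min_eq_right (hlo.trans hhi)] at hne ⊢
    have : lo < x := lt_of_le_of_ne hlo (Ne.symm hne)
    nlinarith
  rcases le_or_gt v hi with hv' | hv'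
  · rw [max_eq_right hv.le, min_eq_right hv'] at hne ⊢
    rw [sub_self, zero_pow two_ne_zero]
    exact sq_pos_of_ne_zero (sub_ne_zero.mpr hne)
  · rw [max_eq_right hv.le, min_eq_left hv'.le] at hne ⊢
    have : x < hi := lt_of_le_of_ne hhi hne
    nlinarith

lemma clamp_unique_maximizer {f : ℝ → ℝ} (h : lo ≤ hi)
    (hf : ∀ x ∈ Icc lo hi, ∀ y ∈ Icc lo hi, (x - v) ^ 2 < (y - v) ^ 2 → f y < f x) :
    min hi (max lo v) ∈ Icc lo hi ∧
    (∀ a ∈ Icc lo hi, f a ≤ f (min hi (max lo v))) ∧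
    (∀ a ∈ Icc lo hi, (∀ a' ∈ Icc lo hi, f a' ≤ f a) → a = min hi (max lo v)) := by
  have hmem := clamp_mem_Icc (v := v) h
  refine ⟨hmem, fun a ha => ?_, fun a ha hmax => ?_⟩
  · rcases eq_or_ne a (min hi (max lo v)) with rfl | hne
    · exact le_rfl
    · exact (hf _ hmem a ha (sq_sub_clamp_lt ha hne)).le
  · by_contra hne
    exact (hmax _ hmem).not_gt (hf _ hmem a ha (sq_sub_clamp_lt ha hne))

end Clamp

lemma one_add_div_mul_one_add_div_sub {g₁ g₂ C₁ C₂ : ℝ} (hg₁ : g₁ ≠ 0) (hg₂ : g₂ ≠ 0)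
    (hC₁ : C₁ ≠ 0) (hC₂ : C₂ ≠ 0) (a₁ a₂ : ℝ) :
    (1 + a₁ * g₁ / C₁) * (1 + (1 - a₁) * g₂ / C₂) - (1 + a₂ * g₁ / C₁) * (1 + (1 - a₂) * g₂ / C₂) =
      g₁ * g₂ / (C₁ * C₂) * ((a₂ - ((C₂ + g₂) / (2 * g₂) - C₁ / (2 * g₁))) ^ 2 -
        (a₁ - ((C₂ + g₂) / (2 * g₂) - C₁ / (2 * g₁))) ^ 2) := by
  field_simp
  ring

noncomputable def unconstrainedBestResponse (gk1 gk2 gi1 gi2 b : ℝ) : ℝ :=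
  -(1 / 2) * (gi1 / gk1 + gi2 / gk2) * b + (gk1 * (1 + gi2) + gk2 * (gk1 - 1)) / (2 * gk1 * gk2)

lemma unconstrainedBestResponse_eq_vertex {gk1 gk2 : ℝ} (hk1 : gk1 ≠ 0) (hk2 : gk2 ≠ 0)
    (gi1 gi2 b : ℝ) :
    unconstrainedBestResponse gk1 gk2 gi1 gi2 b =
      ((1 + (1 - b) * gi2) + gk2) / (2 * gk2) - (1 + b * gi1) / (2 * gk1) := by
  unfold unconstrainedBestResponse
  field_simp
  ring

lemma u_lt_u_of_sq_sub_lt {gk1 gk2 gi1 gi2 b a₁ a₂ : ℝ}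
    (hk1 : 0 < gk1) (hk2 : 0 < gk2) (hi1 : 0 ≤ gi1) (hi2 : 0 ≤ gi2) (hb : b ∈ Icc (0 : ℝ) 1)
    (ha₁ : a₁ ∈ Icc (0 : ℝ) 1) (ha₂ : a₂ ∈ Icc (0 : ℝ) 1)
    (h : (a₁ - unconstrainedBestResponse gk1 gk2 gi1 gi2 b) ^ 2 <
      (a₂ - unconstrainedBestResponse gk1 gk2 gi1 gi2 b) ^ 2) :
    u gk1 gk2 gi1 gi2 a₂ b < u gk1 gk2 gi1 gi2 a₁ b := by
  obtain ⟨hb0, hb1⟩ := hb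
  have hC₁ : 0 < 1 + b * gi1 := by positivity
  have hC₂ : 0 < 1 + (1 - b) * gi2 := add_pos_of_pos_of_nonneg one_pos (mul_nonneg (by linarith) hi2)
  have hpos : ∀ a ∈ Icc (0 : ℝ) 1,
      0 < 1 + a * gk1 / (1 + b * gi1) ∧ 0 < 1 + (1 - a) * gk2 / (1 + (1 - b) * gi2) := by
    rintro a ⟨ha0, ha1⟩
    have : 0 ≤ 1 - a := by linarith
    constructor <;> positivity
  have hprod : (1 + a₂ * gk1 / (1 + b * gi1)) * (1 + (1 - a₂) * gk2 / (1 + (1 - b) * gi2)) <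
      (1 + a₁ * gk1 / (1 + b * gi1)) * (1 + (1 - a₁) * gk2 / (1 + (1 - b) * gi2)) := by
    rw [← sub_pos, one_add_div_mul_one_add_div_sub hk1.ne' hk2.ne' hC₁.ne' hC₂.ne',
      ← unconstrainedBestResponse_eq_vertex hk1.ne' hk2.ne']
    exact mul_pos (by positivity) (sub_pos.mpr h)
  obtain ⟨h₁, h₁'⟩ := hpos a₁ ha₁
  obtain ⟨h₂, h₂'⟩ := hpos a₂ ha₂
  rw [u, u, ← logb_mul h₁.ne' h₁'.ne', ← logb_mul h₂.ne' h₂'.ne']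
  exact logb_lt_logb one_lt_two (mul_pos h₂ h₂') hprod

/-- The unique maximizer of the PA utility over `[0,1]` is the clamp of
`c_k α_{-k} + d_k`. -/
theorem pa_best_response
    (gk1 gk2 gi1 gi2 : ℝ)
    (hk1 : 0 < gk1) (hk2 : 0 < gk2) (hi1 : 0 < gi1) (hi2 : 0 < gi2)
    (b : ℝ) (hb : b ∈ Set.Icc (0 : ℝ) 1) :
    let c : ℝ := -(1 / 2) * (gi1 / gk1 + gi2 / gk2)
    let d : ℝ := (gk1 * (1 + gi2) + gk2 * (gk1 - 1)) / (2 * gk1 * gk2)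
    let astar : ℝ := min 1 (max 0 (c * b + d))
    astar ∈ Set.Icc (0 : ℝ) 1 ∧
    (∀ a ∈ Set.Icc (0 : ℝ) 1, u gk1 gk2 gi1 gi2 a b ≤ u gk1 gk2 gi1 gi2 astar b) ∧
    (∀ a ∈ Set.Icc (0 : ℝ) 1,
      (∀ a' ∈ Set.Icc (0 : ℝ) 1, u gk1 gk2 gi1 gi2 a' b ≤ u gk1 gk2 gi1 gi2 a b) →
      a = astar) :=
  clamp_unique_maximizer zero_le_one fun _ hx _ hy h =>
    u_lt_u_of_sq_sub_lt hk1 hk2 hi1.le hi2.le hb hx hy h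
end

section
/- Fix α_{-k} ∈ [0,1]. The derivative with respect to α_k of u_k(α_k, α_{-k}) vanishes at α_k = c_k α_{-k} + d_k, where c_k = -(1/2)(g_{k,-k}^{(1)}/g_{k,k}^{(1)} + g_{k,-k}^{(2)}/g_{k,k}^{(2)}) and d_k = (g_{k,k}^{(1)}(1+g_{k,-k}^{(2)}) + g_{k,k}^{(2)}(g_{k,k}^{(1)}-1))/(2 g_{k,k}^{(1)} g_{k,k}^{(2)}). -/
open Real Set

/-! With `A = 1 + b * gi1` and `B = 1 + (1 - b) * gi2`, the utility is a sum of two base-2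
logarithms of affine functions of `a`, so its derivative is
`(gk1 / (A + a * gk1) - gk2 / (B + (1 - a) * gk2)) / log 2`. It vanishes exactly when
`gk1 * (B + (1 - a) * gk2) = gk2 * (A + a * gk1)`, a linear equation in `a` whose solution
`(gk1 * (B + gk2) - gk2 * A) / (2 * gk1 * gk2)` expands to `c * b + d`. -/

theorem hasDerivAt_logb_one_add_mul_div {g A x : ℝ} (hA : A ≠ 0) (hx : A + x * g ≠ 0) :
    HasDerivAt (fun a => logb 2 (1 + a * g / A)) (g / (A + x * g) / log 2) x := by
  have hf : HasDerivAt (fun a => 1 + a * g / A) (g / A) x := by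
    simpa using (((hasDerivAt_id x).mul_const g).div_const A).const_add 1
  have harg : 1 + x * g / A ≠ 0 := by
    rw [one_add_div hA]
    exact div_ne_zero hx hA
  refine ((hf.log harg).div_const (log 2)).congr_deriv ?_
  rw [one_add_div hA]
  field_simp

theorem hasDerivAt_logb_one_add_one_sub_mul_div {g B x : ℝ} (hB : B ≠ 0)
    (hx : B + (1 - x) * g ≠ 0) :
    HasDerivAt (fun a => logb 2 (1 + (1 - a) * g / B)) (-(g / (B + (1 - x) * g) / log 2)) x := by
  have h := (hasDerivAt_logb_one_add_mul_div hB hx).comp x ((hasDerivAt_id x).const_sub 1)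
  simpa [Function.comp_def] using h

theorem div_add_mul_eq_div_add_one_sub_mul {g₁ g₂ A B x : ℝ} (h₁ : g₁ ≠ 0) (h₂ : g₂ ≠ 0)
    (hA : A + x * g₁ ≠ 0) (hB : B + (1 - x) * g₂ ≠ 0)
    (hx : x = (g₁ * (B + g₂) - g₂ * A) / (2 * g₁ * g₂)) :
    g₁ / (A + x * g₁) = g₂ / (B + (1 - x) * g₂) := by
  rw [div_eq_div_iff hA hB, hx]
  field_simp
  ring

/-- The derivative of the PA utility in the own action vanishes at
`α_k = c_k α_{-k} + d_k` (where the logarithm arguments are positive). -/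
theorem pa_deriv_zero
    (gk1 gk2 gi1 gi2 : ℝ)
    (hk1 : 0 < gk1) (hk2 : 0 < gk2) (hi1 : 0 < gi1) (hi2 : 0 < gi2)
    (b : ℝ) (hb : b ∈ Set.Icc (0 : ℝ) 1)
    (c d : ℝ)
    (hc : c = -(1 / 2) * (gi1 / gk1 + gi2 / gk2))
    (hd : d = (gk1 * (1 + gi2) + gk2 * (gk1 - 1)) / (2 * gk1 * gk2))
    (hpos1 : 0 < 1 + (c * b + d) * gk1 / (1 + b * gi1))
    (hpos2 : 0 < 1 + (1 - (c * b + d)) * gk2 / (1 + (1 - b) * gi2)) :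
    HasDerivAt (fun a => u gk1 gk2 gi1 gi2 a b) 0 (c * b + d) := by
  obtain ⟨hb0, hb1⟩ := hb
  set x := c * b + d
  have hA : 0 < 1 + b * gi1 := by positivity
  have hB : 0 < 1 + (1 - b) * gi2 := by nlinarith
  rw [one_add_div hA.ne', div_pos_iff_of_pos_right hA] at hpos1
  rw [one_add_div hB.ne', div_pos_iff_of_pos_right hB] at hpos2
  have hx : x = (gk1 * (1 + (1 - b) * gi2 + gk2) - gk2 * (1 + b * gi1)) / (2 * gk1 * gk2) := by
    simp only [x, hc, hd]
    field_simp
    ring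
  refine ((hasDerivAt_logb_one_add_mul_div hA.ne' hpos1.ne').add
    (hasDerivAt_logb_one_add_one_sub_mul_div hB.ne' hpos2.ne')).congr_deriv ?_
  rw [div_add_mul_eq_div_add_one_sub_mul hk1.ne' hk2.ne' hpos1.ne' hpos2.ne' hx]
  ring
end

section
/- The power allocation game always has at least one pure Nash equilibrium: there exists (α₁*, α₂*) ∈ [0,1]² such that for each k ∈ {1,2}, u_k(α_k*, α_{-k}*) ≥ u_k(α_k, α_{-k}*) for all α_k ∈ [0,1]. -/
/-!
Against a fixed opponent action `b`, player `k` faces effective noise-to-gain levels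
`n₁ = (1 + b g₁')/g₁` and `n₂ = (1 + (1 - b) g₂')/g₂` on its two channels, and its utility is
`log ((n₁ + a)(n₂ + 1 - a)) - log (n₁ n₂)`, a concave quadratic under a logarithm. Its
maximiser over `[0, 1]` is the clamped vertex (water-filling), which depends continuously on
`b`. The composite of the two best-response maps is then a continuous self-map of `[0, 1]`,
and any fixed point `b` yields the equilibrium `(BR₁ b, b)`.
-/

open Real Set

section projIcc

variable {α : Type*} [CommRing α] [LinearOrder α] [IsStrictOrderedRing α] {a b : α}

theorem abs_projIcc_sub_le (h : a ≤ b) (x : α) {y : α} (hy : y ∈ Icc a b) :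
    |(projIcc a b h x : α) - x| ≤ |y - x| := by
  rcases le_total x a with hxa | hax
  · rw [projIcc_of_le_left h hxa, abs_of_nonneg (sub_nonneg.2 hxa),
      abs_of_nonneg (by linarith [hy.1])]
    linarith [hy.1]
  rcases le_total b x with hbx | hxb
  · rw [projIcc_of_right_le h hbx, abs_of_nonpos (sub_nonpos.2 hbx),
      abs_of_nonpos (by linarith [hy.2])]
    linarith [hy.2]
  · simp [projIcc_of_mem h ⟨hax, hxb⟩]

theorem isMaxOn_projIcc_sub_sq (h : a ≤ b) (C m : α) :
    IsMaxOn (fun x => C - (x - m) ^ 2) (Icc a b) (projIcc a b h m) := fun _y hy =>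
  sub_le_sub_left (sq_le_sq.2 (abs_projIcc_sub_le h m hy)) C

end projIcc

noncomputable def waterFilling (n₁ n₂ : ℝ) : ℝ :=
  projIcc 0 1 zero_le_one ((1 + n₂ - n₁) / 2)

theorem waterFilling_mem (n₁ n₂ : ℝ) : waterFilling n₁ n₂ ∈ Icc (0 : ℝ) 1 :=
  Subtype.prop _

theorem isMaxOn_waterFilling {n₁ n₂ : ℝ} (hn₁ : 0 < n₁) (hn₂ : 0 < n₂) :
    IsMaxOn (fun a => logb 2 (1 + a / n₁) + logb 2 (1 + (1 - a) / n₂)) (Icc 0 1)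
      (waterFilling n₁ n₂) := by
  have hlog : ∀ a ∈ Icc (0 : ℝ) 1, logb 2 (1 + a / n₁) + logb 2 (1 + (1 - a) / n₂) =
      logb 2 (((n₁ + n₂ + 1) / 2) ^ 2 - (a - (1 + n₂ - n₁) / 2) ^ 2) - logb 2 (n₁ * n₂) := by
    rintro a ⟨ha₀, ha₁⟩
    have h₁ : 1 + a / n₁ = (n₁ + a) / n₁ := by field_simp
    have h₂ : 1 + (1 - a) / n₂ = (n₂ + 1 - a) / n₂ := by field_simp; ring
    have hprod : ((n₁ + n₂ + 1) / 2) ^ 2 - (a - (1 + n₂ - n₁) / 2) ^ 2 =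
        (n₁ + a) * (n₂ + 1 - a) := by ring
    rw [h₁, h₂, hprod, logb_div (by linarith) hn₁.ne', logb_div (by linarith) hn₂.ne',
      logb_mul (by linarith) (by linarith), logb_mul hn₁.ne' hn₂.ne']
    ring
  refine isMaxOn_iff.2 fun a ha => ?_
  rw [hlog a ha, hlog _ (waterFilling_mem n₁ n₂)]
  refine sub_le_sub_right
    (logb_le_logb_of_le one_lt_two ?_ (isMaxOn_projIcc_sub_sq zero_le_one _ _ ha)) _
  nlinarith [mul_pos (add_pos_of_pos_of_nonneg hn₁ ha.1) (by linarith [ha.2] : 0 < n₂ + 1 - a)]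

noncomputable def bestResponse (gk1 gk2 gi1 gi2 b : ℝ) : ℝ :=
  waterFilling ((1 + b * gi1) / gk1) ((1 + (1 - b) * gi2) / gk2)

theorem bestResponse_mem (gk1 gk2 gi1 gi2 b : ℝ) :
    bestResponse gk1 gk2 gi1 gi2 b ∈ Icc (0 : ℝ) 1 :=
  waterFilling_mem _ _

theorem continuous_bestResponse (gk1 gk2 gi1 gi2 : ℝ) :
    Continuous (bestResponse gk1 gk2 gi1 gi2) :=
  continuous_subtype_val.comp <| continuous_projIcc.comp <| by fun_prop

theorem isMaxOn_bestResponse {gk1 gk2 gi1 gi2 b : ℝ} (hk1 : 0 < gk1) (hk2 : 0 < gk2)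
    (hi1 : 0 ≤ gi1) (hi2 : 0 ≤ gi2) (hb : b ∈ Icc (0 : ℝ) 1) :
    IsMaxOn (fun a => u gk1 gk2 gi1 gi2 a b) (Icc 0 1) (bestResponse gk1 gk2 gi1 gi2 b) := by
  have hn₁ : 0 < (1 + b * gi1) / gk1 := by have := mul_nonneg hb.1 hi1; positivity
  have hn₂ : 0 < (1 + (1 - b) * gi2) / gk2 := by
    have := mul_nonneg (sub_nonneg.2 hb.2) hi2; positivity
  unfold bestResponse
  simpa only [u, div_div_eq_mul_div] using isMaxOn_waterFilling hn₁ hn₂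

/-- The PA game always has at least one pure Nash equilibrium. -/
theorem pa_exists_pure_NE
    (g111 g112 g121 g122 g211 g212 g221 g222 : ℝ)
    (h111 : 0 < g111) (h112 : 0 < g112) (h121 : 0 < g121) (h122 : 0 < g122)
    (h211 : 0 < g211) (h212 : 0 < g212) (h221 : 0 < g221) (h222 : 0 < g222) :
    ∃ a1 a2 : ℝ, a1 ∈ Set.Icc (0 : ℝ) 1 ∧ a2 ∈ Set.Icc (0 : ℝ) 1 ∧
      (∀ a1' ∈ Set.Icc (0 : ℝ) 1,
        u g111 g112 g121 g122 a1' a2 ≤ u g111 g112 g121 g122 a1 a2) ∧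
      (∀ a2' ∈ Set.Icc (0 : ℝ) 1,
        u g221 g222 g211 g212 a2' a1 ≤ u g221 g222 g211 g212 a2 a1) := by
  obtain ⟨b, hb, hfix⟩ : ∃ b ∈ Icc (0 : ℝ) 1,
      bestResponse g221 g222 g211 g212 (bestResponse g111 g112 g121 g122 b) = b :=
    exists_mem_Icc_isFixedPt_of_mapsTo
      ((continuous_bestResponse _ _ _ _).comp (continuous_bestResponse _ _ _ _)).continuousOn
      zero_le_one fun _ _ => bestResponse_mem _ _ _ _ _
  have hbr₁ := isMaxOn_bestResponse h111 h112 h121.le h122.le hb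
  have hbr₂ := isMaxOn_bestResponse h221 h222 h211.le h212.le
    (bestResponse_mem g111 g112 g121 g122 b)
  rw [hfix] at hbr₂
  exact ⟨_, b, bestResponse_mem _ _ _ _ _, hb, isMaxOn_iff.1 hbr₁, isMaxOn_iff.1 hbr₂⟩
end

section
/- Let clamp(x) = min(1, max(0, x)). Let c₁, c₂ < 0 and d₁, d₂ ∈ ℝ, and define BR₁(β) = clamp(c₁ β + d₁) and BR₂(β) = clamp(c₂ β + d₂). If c₁ c₂ < 1, then there is exactly one pair (α₁, α₂) ∈ [0,1]² with α₁ = BR₁(α₂) and α₂ = BR₂(α₁). -/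
/-!
Composing the two best responses gives a self-map of `ℝ` that is Lipschitz with constant
`|c₁| |c₂| = c₁ c₂ < 1`, since clamping is 1-Lipschitz. By the Banach fixed point theorem it has
exactly one fixed point `α₁`, and the equilibria are exactly the pairs `(α₁, BR₂ α₁)`; they lie in
`[0,1]²` automatically because both best responses take values there.
-/

open NNReal

/-- Clamp to `[0,1]`. -/
noncomputable def clamp01 (x : ℝ) : ℝ := min 1 (max 0 x)

lemma clamp01_mem (x : ℝ) : clamp01 x ∈ Set.Icc (0 : ℝ) 1 :=
  ⟨le_min zero_le_one (le_max_left 0 x), min_le_left _ _⟩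

lemma lipschitzWith_clamp01 : LipschitzWith 1 clamp01 :=
  (LipschitzWith.id.const_max 0).const_min 1

lemma lipschitzWith_mul_add (c d : ℝ) : LipschitzWith ‖c‖₊ fun x : ℝ => c * x + d :=
  LipschitzWith.of_dist_le_mul fun x y => by simp [Real.dist_eq, ← mul_sub, abs_mul]

lemma lipschitzWith_clamp01_mul_add (c d : ℝ) :
    LipschitzWith ‖c‖₊ fun x : ℝ => clamp01 (c * x + d) :=
  (lipschitzWith_clamp01.comp (lipschitzWith_mul_add c d)).weaken (one_mul _).le

lemma existsUnique_eq_and_eq_of_existsUnique_isFixedPt_comp {α β : Type*} (f : β → α)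
    (g : α → β) (h : ∃! a, Function.IsFixedPt (f ∘ g) a) :
    ∃! p : α × β, p.1 = f p.2 ∧ p.2 = g p.1 := by
  obtain ⟨a, ha, ha_unique⟩ := h
  refine ⟨(a, g a), ⟨ha.symm, rfl⟩, ?_⟩
  rintro ⟨a', b'⟩ ⟨h1 : a' = f b', rfl : b' = g a'⟩
  obtain rfl : a' = a := ha_unique a' h1.symm
  rfl

lemma ContractingWith.existsUnique_isFixedPt {α : Type*} [MetricSpace α] [Nonempty α]
    [CompleteSpace α] {K : ℝ≥0} {f : α → α} (hf : ContractingWith K f) :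
    ∃! x, Function.IsFixedPt f x :=
  ⟨fixedPoint f hf, hf.fixedPoint_isFixedPt, fun _ hx => hf.fixedPoint_unique hx⟩

/-- For clamped affine best responses with negative slopes whose product is
less than 1, there is a unique fixed point in `[0,1]²`. -/
theorem clamp_affine_unique_fixed_point
    (c1 c2 d1 d2 : ℝ) (hc1 : c1 < 0) (hc2 : c2 < 0) (h : c1 * c2 < 1) :
    ∃! p : ℝ × ℝ, p ∈ Set.Icc (0 : ℝ) 1 ×ˢ Set.Icc (0 : ℝ) 1 ∧
      p.1 = clamp01 (c1 * p.2 + d1) ∧ p.2 = clamp01 (c2 * p.1 + d2) := by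
  have hK : ‖c1‖₊ * ‖c2‖₊ < 1 := by
    rw [← nnnorm_mul, ← NNReal.coe_lt_coe, coe_nnnorm,
      Real.norm_of_nonneg (mul_pos_of_neg_of_neg hc1 hc2).le]
    exact_mod_cast h
  have hcontr : ContractingWith (‖c1‖₊ * ‖c2‖₊)
      ((fun x => clamp01 (c1 * x + d1)) ∘ fun x => clamp01 (c2 * x + d2)) :=
    ⟨hK, (lipschitzWith_clamp01_mul_add c1 d1).comp (lipschitzWith_clamp01_mul_add c2 d2)⟩
  refine (existsUnique_congr fun p => ?_).mp
    (existsUnique_eq_and_eq_of_existsUnique_isFixedPt_comp _ _ hcontr.existsUnique_isFixedPt)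
  exact (and_iff_right_of_imp fun hp => ⟨hp.1 ▸ clamp01_mem _, hp.2 ▸ clamp01_mem _⟩).symm
end

section
/- In the channel selection game, if g_{1,1}^{(1)} > g_{1,1}^{(2)} (player 1's direct gain is larger on channel 1) and g_{2,2}^{(2)} > g_{2,2}^{(1)} (player 2's direct gain is larger on channel 2), then (α₁, α₂) = (1,0) is a pure Nash equilibrium. -/
open Real Set

lemma logb_one_add_div_one_add_le {g g' i : ℝ} (hg : 0 ≤ g) (hi : 0 ≤ i) (h : g ≤ g') :
    logb 2 (1 + g / (1 + i)) ≤ logb 2 (1 + g') := by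
  gcongr
  · norm_num
  · calc g / (1 + i) ≤ g := div_le_self hg (by linarith)
      _ ≤ g' := h

lemma u_zero_zero_le_u_one_zero {gk1 gk2 gi1 gi2 : ℝ} (hgk2 : 0 ≤ gk2) (hgi2 : 0 ≤ gi2)
    (h : gk2 ≤ gk1) : u gk1 gk2 gi1 gi2 0 0 ≤ u gk1 gk2 gi1 gi2 1 0 := by
  simpa [u] using logb_one_add_div_one_add_le hgk2 hgi2 h

lemma u_one_one_le_u_zero_one {gk1 gk2 gi1 gi2 : ℝ} (hgk1 : 0 ≤ gk1) (hgi1 : 0 ≤ gi1)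
    (h : gk1 ≤ gk2) : u gk1 gk2 gi1 gi2 1 1 ≤ u gk1 gk2 gi1 gi2 0 1 := by
  simpa [u] using logb_one_add_div_one_add_le hgk1 hgi1 h

theorem cs_opposite_channels_NE_general
    (g111 g112 g121 g122 g211 g212 g221 g222 : ℝ)
    (h112 : 0 < g112) (h122 : 0 < g122)
    (h211 : 0 < g211) (h221 : 0 < g221)
    (h1 : g112 < g111) (h2 : g221 < g222) :
    (∀ a1' ∈ ({0, 1} : Set ℝ),
      u g111 g112 g121 g122 a1' 0 ≤ u g111 g112 g121 g122 1 0) ∧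
    (∀ a2' ∈ ({0, 1} : Set ℝ),
      u g221 g222 g211 g212 a2' 1 ≤ u g221 g222 g211 g212 0 1) := by
  constructor
  · rintro a (rfl | rfl)
    · exact u_zero_zero_le_u_one_zero h112.le h122.le h1.le
    · exact le_rfl
  · rintro a (rfl | rfl)
    · exact le_rfl
    · exact u_one_one_le_u_zero_one h221.le h211.le h2.le

/-- If each player's direct gain is larger on a different channel, using those
different channels is a pure NE of the CS game. -/
theorem cs_opposite_channels_NE
    (g111 g112 g121 g122 g211 g212 g221 g222 : ℝ)
    (h111 : 0 < g111) (h112 : 0 < g112) (h121 : 0 < g121) (h122 : 0 < g122)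
    (h211 : 0 < g211) (h212 : 0 < g212) (h221 : 0 < g221) (h222 : 0 < g222)
    (h1 : g112 < g111) (h2 : g221 < g222) :
    (∀ a1' ∈ ({0, 1} : Set ℝ),
      u g111 g112 g121 g122 a1' 0 ≤ u g111 g112 g121 g122 1 0) ∧
    (∀ a2' ∈ ({0, 1} : Set ℝ),
      u g221 g222 g211 g212 a2' 1 ≤ u g221 g222 g211 g212 0 1) :=
  cs_opposite_channels_NE_general g111 g112 g121 g122 g211 g212 g221 g222 h112 h122 h211 h221 h1 h2
end
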